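/- arXiv:2502.07984 — 3 statements merged into one kernel-verified Lean document; each statement's English description precedes it below -/
import Mathlib

section
/- Let X be a compact Hausdorff space with a continuous action α of a semigroup S which is expansive with expansivity entourage E and has the pseudo-orbit tracing property. Then there exists a finite set K ⊆ S and entourage W of X such that for every continuous action β of S on X that is E-expansive and satisfies (α_k(x), β_k(x)) ∈ W for all k ∈ K, x ∈ X, there exists an injective continuous map h : X → X with α_s ∘ h = h ∘ β_s for all s ∈ S. -/
/-!
Fix a closed symmetric entourage `U` with `U ○ U ⊆ E` and let `K, V` be the pseudo-orbit tracing
data of `α` for `U`. If `β` is `V`-close to `α` on `K`, every `β`-orbit is a `(K, V)`-pseudo-orbit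
of `α`, hence is `U`-traced by an `α`-orbit, and `h x` is the point tracing the `β`-orbit of `x`.
Expansiveness of `α` makes the tracing point unique, which gives the conjugacy relation and,
since `U` is closed, a closed graph for `h`; expansiveness of `β` gives injectivity.
-/

open Set Uniformity
open scoped SetRel

theorem exists_isClosed_isSymm_comp_subset {X : Type*} [UniformSpace X] {E : SetRel X X}
    (hE : E ∈ 𝓤 X) : ∃ U ∈ 𝓤 X, IsClosed U ∧ SetRel.IsSymm U ∧ U ○ U ⊆ E := by
  obtain ⟨T, hT, hTE⟩ := comp_mem_uniformity_sets hE
  obtain ⟨U, ⟨hU, hUclosed⟩, hUT⟩ := uniformity_hasBasis_closed.mem_iff.mp hT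
  have hsub : SetRel.symmetrize U ⊆ T := SetRel.symmetrize_subset_self.trans hUT
  refine ⟨SetRel.symmetrize U, symmetrize_mem_uniformity hU,
    hUclosed.inter (hUclosed.preimage continuous_swap), inferInstance, ?_⟩
  calc SetRel.symmetrize U ○ SetRel.symmetrize U ⊆ T ○ T := by gcongr
    _ ⊆ E := hTE

theorem continuous_of_isClosed_graph_of_compactSpace {X Y : Type*} [TopologicalSpace X]
    [TopologicalSpace Y] [CompactSpace Y] {f : X → Y}
    (hf : IsClosed {p : X × Y | f p.1 = p.2}) : Continuous f := by
  refine continuous_iff_isClosed.mpr fun C hC => ?_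
  have hpre : f ⁻¹' C = Prod.fst '' ({p : X × Y | f p.1 = p.2} ∩ univ ×ˢ C) := by
    ext x
    constructor
    · intro hx
      exact ⟨(x, f x), ⟨rfl, mem_univ x, hx⟩, rfl⟩
    · rintro ⟨⟨a, b⟩, ⟨hab, -, hb⟩, rfl⟩
      exact (hab ▸ hb : f a ∈ C)
  rw [hpre]
  exact isClosedMap_fst_of_compactSpace _ (hf.inter (isClosed_univ.prod hC))

section Tracing

variable {S X : Type*}

def IsExpansiveWith (α : S → X → X) (E : SetRel X X) : Prop :=
  ∀ x y : X, x ≠ y → ∃ s : S, (α s x, α s y) ∉ E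

variable {E U : SetRel X X}

theorem IsExpansiveWith.eq_of_forall_mem_comp {α : S → X → X} (hα : IsExpansiveWith α E)
    (hUE : U ○ U ⊆ E) {c : S → X} {y y' : X} (hy : ∀ s, (α s y, c s) ∈ U)
    (hy' : ∀ s, (c s, α s y') ∈ U) : y = y' := by
  by_contra hne
  obtain ⟨s, hs⟩ := hα y y' hne
  exact hs (hUE (SetRel.prodMk_mem_comp (hy s) (hy' s)))

variable {α β : S → X → X} {h : X → X}

theorem IsExpansiveWith.injective_of_traces [U.IsSymm] (hβ : IsExpansiveWith β E)
    (hUE : U ○ U ⊆ E) (hh : ∀ x s, (α s (h x), β s x) ∈ U) : Function.Injective h := by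
  intro x x' hxx'
  refine hβ.eq_of_forall_mem_comp hUE (c := fun s => α s (h x)) (fun s => U.symm (hh x s))
    fun s => ?_
  simpa only [hxx'] using hh x' s

theorem IsExpansiveWith.semiconj_of_traces [Mul S] [U.IsSymm] (hα : IsExpansiveWith α E)
    (hUE : U ○ U ⊆ E) (hαact : ∀ s t x, α (s * t) x = α s (α t x))
    (hβact : ∀ s t x, β (s * t) x = β s (β t x)) (hh : ∀ x s, (α s (h x), β s x) ∈ U) (s : S) :
    Function.Semiconj h (β s) (α s) := by
  intro x
  refine hα.eq_of_forall_mem_comp hUE (c := fun t => β t (β s x)) (y' := α s (h x))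
    (fun t => hh (β s x) t) fun t => ?_
  rw [← hαact, ← hβact]
  exact U.symm (hh x (t * s))

theorem IsExpansiveWith.continuous_of_traces [TopologicalSpace X] [CompactSpace X] [U.IsSymm]
    (hα : IsExpansiveWith α E) (hUE : U ○ U ⊆ E) (hU : IsClosed U)
    (hαcont : ∀ s, Continuous (α s)) (hβcont : ∀ s, Continuous (β s))
    (hh : ∀ x s, (α s (h x), β s x) ∈ U) : Continuous h := by
  have hgraph : {p : X × X | h p.1 = p.2} = ⋂ s, (fun p : X × X => (α s p.2, β s p.1)) ⁻¹' U := by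
    ext p
    simp only [mem_iInter, mem_preimage]
    constructor
    · intro hp s
      rw [← hp]
      exact hh p.1 s
    · intro hp
      exact hα.eq_of_forall_mem_comp hUE (hh p.1) fun s => U.symm (hp s)
  refine continuous_of_isClosed_graph_of_compactSpace ?_
  rw [hgraph]
  exact isClosed_iInter fun s =>
    hU.preimage (((hαcont s).comp continuous_snd).prodMk ((hβcont s).comp continuous_fst))

end Tracing

theorem stmt_4_general {S X : Type*} [Semigroup S] [UniformSpace X] [CompactSpace X]
    (α : S → X → X) (hαact : ∀ (s t : S) (x : X), α (s * t) x = α s (α t x))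
    (hαcont : ∀ s : S, Continuous (α s))
    (E : Set (X × X)) (hE : E ∈ uniformity X)
    (hexp : ∀ x y : X, x ≠ y → ∃ s : S, (α s x, α s y) ∉ E)
    (hpotp : ∀ U ∈ uniformity X, ∃ K : Finset S, ∃ V ∈ uniformity X,
        ∀ xs : S → X, (∀ k ∈ K, ∀ s : S, (α k (xs s), xs (k * s)) ∈ V) →
          ∃ x : X, ∀ s : S, (α s x, xs s) ∈ U) :
    ∃ K : Finset S, ∃ W ∈ uniformity X,
      ∀ β : S → X → X, (∀ (s t : S) (x : X), β (s * t) x = β s (β t x)) →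
        (∀ s : S, Continuous (β s)) →
        (∀ x y : X, x ≠ y → ∃ s : S, (β s x, β s y) ∉ E) →
        (∀ k ∈ K, ∀ x : X, (α k x, β k x) ∈ W) →
        ∃ h : X → X, Function.Injective h ∧ Continuous h ∧
          ∀ (s : S) (x : X), α s (h x) = h (β s x) := by
  obtain ⟨U, hU, hUclosed, hUsymm, hUE⟩ := exists_isClosed_isSymm_comp_subset hE
  obtain ⟨K, V, hV, htrace⟩ := hpotp U hU
  refine ⟨K, V, hV, fun β hβact hβcont hβexp hβV => ?_⟩
  have horbit : ∀ x, ∃ y, ∀ s, (α s y, β s x) ∈ U := fun x =>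
    htrace (fun s => β s x) fun k hk s => by
      rw [hβact]
      exact hβV k hk (β s x)
  choose h hh using horbit
  have hα : IsExpansiveWith α E := hexp
  have hβ : IsExpansiveWith β E := hβexp
  exact ⟨h, hβ.injective_of_traces hUE hh, hα.continuous_of_traces hUE hUclosed hαcont hβcont hh,
    fun s x => (hα.semiconj_of_traces hUE hαact hβact hh s x).symm⟩

/-- If `α` is an expansive continuous semigroup action with expansivity entourage `E`
having the pseudo-orbit tracing property, then there exist a finite `K ⊆ S` and an
entourage `W` such that every `E`-expansive continuous action `β` with
`(α_k x, β_k x) ∈ W` for all `k ∈ K`, `x ∈ X` admits an injective continuous map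
`h : X → X` with `α_s ∘ h = h ∘ β_s` for all `s ∈ S`. -/
theorem stmt_4 {S X : Type*} [Semigroup S] [UniformSpace X] [CompactSpace X] [T2Space X]
    (α : S → X → X) (hαact : ∀ (s t : S) (x : X), α (s * t) x = α s (α t x))
    (hαcont : ∀ s : S, Continuous (α s))
    (E : Set (X × X)) (hE : E ∈ uniformity X)
    (hexp : ∀ x y : X, x ≠ y → ∃ s : S, (α s x, α s y) ∉ E)
    (hpotp : ∀ U ∈ uniformity X, ∃ K : Finset S, ∃ V ∈ uniformity X,
        ∀ xs : S → X, (∀ k ∈ K, ∀ s : S, (α k (xs s), xs (k * s)) ∈ V) →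
          ∃ x : X, ∀ s : S, (α s x, xs s) ∈ U) :
    ∃ K : Finset S, ∃ W ∈ uniformity X,
      ∀ β : S → X → X, (∀ (s t : S) (x : X), β (s * t) x = β s (β t x)) →
        (∀ s : S, Continuous (β s)) →
        (∀ x y : X, x ≠ y → ∃ s : S, (β s x, β s y) ∉ E) →
        (∀ k ∈ K, ∀ x : X, (α k x, β k x) ∈ W) →
        ∃ h : X → X, Function.Injective h ∧ Continuous h ∧
          ∀ (s : S) (x : X), α s (h x) = h (β s x) :=
  stmt_4_general α hαact hαcont E hE hexp hpotp
end

section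
/- Let S be a semigroup, A a finite set, and suppose there exists a finite K ⊆ S with S = K·S. Let X ⊆ A^S be a subshift. If the dynamical system (X,S) has the pseudo-orbit tracing property, then X is a subshift of finite type. -/
/-!
Apply the pseudo-orbit tracing property to the entourage "agree on `K`", obtaining a finite
`T` and an entourage containing "agree on `F`". Let `W = K ∪ F ∪ F T` and let `P` be the set of
`W`-patterns occurring in `X`. If every shift of `x₀` shows a pattern of `P` on `W`, choosing
for each `s` a point of `X` that realises the pattern of `s · x₀` yields a pseudo-orbit (the
coordinates in `F T` make consecutive points agree on `F`). A point of `X` tracing it agrees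
with `x₀` on every `k s` with `k ∈ K`, and these cover `S` because `S = K S`; so `x₀ ∈ X`.
-/

open Filter Uniformity Pointwise

theorem Pi.hasBasis_uniformity_of_discreteUniformity {S A : Type*} [UniformSpace A]
    [DiscreteUniformity A] :
    (𝓤 (S → A)).HasBasis (fun _ : Finset S => True)
      fun F => {p | ∀ f ∈ F, p.1 f = p.2 f} := by
  have h : 𝓤 (S → A) = ⨅ s : S, 𝓟 {p : (S → A) × (S → A) | p.1 s = p.2 s} := by
    simp only [Pi.uniformity, DiscreteUniformity.eq_principal_setRelId, comap_principal]
    rfl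
  rw [h]
  refine ⟨fun U => (hasBasis_iInf_principal_finite _).mem_iff.trans ⟨?_, ?_⟩⟩
  · rintro ⟨t, ht, htU⟩
    exact ⟨ht.toFinset, trivial,
      fun p hp => htU (Set.mem_iInter₂.2 fun f hf => hp f (ht.mem_toFinset.2 hf))⟩
  · rintro ⟨F, -, hFU⟩
    exact ⟨F, F.finite_toSet, fun p hp => hFU fun f hf => Set.mem_iInter₂.1 hp f hf⟩

theorem hasBasis_uniformity_subtype_of_discreteUniformity {S A : Type*} [UniformSpace A]
    [DiscreteUniformity A] (X : Set (S → A)) :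
    (𝓤 X).HasBasis (fun _ : Finset S => True)
      fun F => {p | ∀ f ∈ F, p.1.1 f = p.2.1 f} :=
  Pi.hasBasis_uniformity_of_discreteUniformity.comap _

theorem mem_of_forall_shift_agrees {S A : Type*} [Semigroup S] [DecidableEq S]
    {X : Set (S → A)} {K F T : Finset S} (hK : ∀ s : S, ∃ k ∈ K, ∃ t : S, s = k * t)
    (htrace : ∀ y : S → S → A, (∀ s, y s ∈ X) →
      (∀ t ∈ T, ∀ s, ∀ f ∈ F, y s (f * t) = y (t * s) f) →
      ∃ x ∈ X, ∀ s, ∀ k ∈ K, x (k * s) = y s k)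
    {x₀ : S → A} (hx₀ : ∀ s, ∃ y ∈ X, ∀ w ∈ K ∪ F ∪ F * T, y w = x₀ (w * s)) : x₀ ∈ X := by
  choose y hyX hy using hx₀
  have hpseudo : ∀ t ∈ T, ∀ s, ∀ f ∈ F, y s (f * t) = y (t * s) f := fun t ht s f hf => by
    rw [hy s _ (by simp [Finset.mul_mem_mul hf ht]), hy (t * s) f (by simp [hf]), mul_assoc]
  obtain ⟨x, hxX, hx⟩ := htrace y hyX hpseudo
  convert hxX using 1
  funext u
  obtain ⟨k, hk, s, rfl⟩ := hK u
  rw [hx s k hk, hy s k (by simp [hk])]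

theorem stmt_8_general {S A : Type*} [Semigroup S] [Finite A] [UniformSpace A] [DiscreteTopology A]
    (K : Finset S) (hK : ∀ s : S, ∃ k ∈ K, ∃ t : S, s = k * t)
    (X : Set (S → A))
    (hinv : ∀ (s : S) (x : S → A), x ∈ X → (fun t => x (t * s)) ∈ X)
    (hpotp : ∀ U ∈ uniformity {x // x ∈ X}, ∃ T : Finset S, ∃ V ∈ uniformity {x // x ∈ X},
        ∀ xs : S → {x // x ∈ X},
          (∀ t ∈ T, ∀ s : S,
            ((⟨fun u => (xs s).1 (u * t), hinv t _ (xs s).2⟩ : {x // x ∈ X}), xs (t * s)) ∈ V) →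
          ∃ x : {x // x ∈ X}, ∀ s : S,
            ((⟨fun u => x.1 (u * s), hinv s _ x.2⟩ : {x // x ∈ X}), xs s) ∈ U) :
    ∃ (W : Finset S) (P : Set (∀ _ : (W : Set S), A)),
      X = {x : S → A | ∀ s : S, (fun w : (W : Set S) => x (w.1 * s)) ∈ P} := by
  classical
  have hbasis := hasBasis_uniformity_subtype_of_discreteUniformity (S := S) (A := A) X
  obtain ⟨T, V, hV, hpo⟩ := hpotp _ (hbasis.mem_of_mem (i := K) trivial)
  obtain ⟨F, -, hFV⟩ := hbasis.mem_iff.1 hV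
  refine ⟨K ∪ F ∪ F * T, (fun y (w : ((K ∪ F ∪ F * T : Finset S) : Set S)) => y w) '' X,
    Set.Subset.antisymm (fun x hx s => ⟨_, hinv s x hx, rfl⟩) fun x₀ hx₀ => ?_⟩
  refine mem_of_forall_shift_agrees (F := F) (T := T) hK (fun y hyX hy => ?_) fun s => ?_
  · obtain ⟨x, hx⟩ := hpo (fun s => ⟨y s, hyX s⟩) fun t ht s => hFV fun f hf => hy t ht s f hf
    exact ⟨x, x.2, fun s k hk => hx s k hk⟩
  · obtain ⟨y, hy, hyx⟩ := hx₀ s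
    exact ⟨y, hy, fun w hw => congrFun hyx ⟨w, hw⟩⟩

/-- Let `S` be a semigroup with a finite `K ⊆ S` such that `S = K·S`, `A` a finite set,
and `X ⊆ A^S` a subshift. If `(X,S)` has the pseudo-orbit tracing property, then `X` is a
subshift of finite type. -/
theorem stmt_8 {S A : Type*} [Semigroup S] [Finite A] [UniformSpace A] [DiscreteTopology A]
    (K : Finset S) (hK : ∀ s : S, ∃ k ∈ K, ∃ t : S, s = k * t)
    (X : Set (S → A)) (hXc : IsClosed X)
    (hinv : ∀ (s : S) (x : S → A), x ∈ X → (fun t => x (t * s)) ∈ X)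
    (hpotp : ∀ U ∈ uniformity {x // x ∈ X}, ∃ T : Finset S, ∃ V ∈ uniformity {x // x ∈ X},
        ∀ xs : S → {x // x ∈ X},
          (∀ t ∈ T, ∀ s : S,
            ((⟨fun u => (xs s).1 (u * t), hinv t _ (xs s).2⟩ : {x // x ∈ X}), xs (t * s)) ∈ V) →
          ∃ x : {x // x ∈ X}, ∀ s : S,
            ((⟨fun u => x.1 (u * s), hinv s _ x.2⟩ : {x // x ∈ X}), xs s) ∈ U) :
    ∃ (W : Finset S) (P : Set (∀ _ : (W : Set S), A)),
      X = {x : S → A | ∀ s : S, (fun w : (W : Set S) => x (w.1 * s)) ∈ P} :=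
  stmt_8_general K hK X hinv hpotp
end

section
/- Let S be a semigroup admitting a left-identity element e (e·t = t for all t ∈ S), A a finite set, and X ⊆ A^S a subshift of finite type. Then the dynamical system (X,S) has the pseudo-orbit tracing property. -/
/-!
Entourages of `A^S` for finite discrete `A` are generated by agreement on finite sets, so let
`U` contain agreement on a finite `F`. Take `V` to be agreement on `W ∪ {e}` and
`K = F ∪ W ∪ {e}`. For a `(K, V)`-pseudo-orbit `(x_s)` the point `x t := x_t e` satisfies
`x (k s) = x_s (e k) = x_s k` for `k ∈ K`, so it traces the pseudo-orbit on `F`; and its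
`W`-windows are `W`-windows of the `x_s ∈ X` (as `x_s (w e) = x_{e s} w = x_s w`), so `x ∈ X`.
-/

open Filter Set Uniformity

theorem Pi.hasBasis_uniformity_of_discrete (S A : Type*) [UniformSpace A]
    [DiscreteUniformity A] :
    (𝓤 (S → A)).HasBasis (fun F : Set S => F.Finite) fun F => {p | EqOn p.1 p.2 F} := by
  simp only [Pi.uniformity, DiscreteUniformity.eq_principal_setRelId, comap_principal]
  convert hasBasis_iInf_principal_finite _ using 2 with F
  ext p
  simp [EqOn, SetRel.id]

section PseudoOrbit

variable {S A : Type*} [Semigroup S]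

def IsPseudoOrbit (K G : Set S) (xs : S → S → A) : Prop :=
  ∀ k ∈ K, ∀ s, EqOn (fun u => xs s (u * k)) (xs (k * s)) G

def shadow (e : S) (xs : S → S → A) : S → A := fun t => xs t e

variable {K G : Set S} {xs : S → S → A} {e : S}

theorem IsPseudoOrbit.shadow_mul (hxs : IsPseudoOrbit K G xs) (he : ∀ t : S, e * t = t)
    (heG : e ∈ G) {k : S} (hk : k ∈ K) (s : S) :
    shadow e xs (k * s) = xs s k := by
  rw [shadow, ← hxs k hk s heG]
  exact congrArg (xs s) (he k)

theorem IsPseudoOrbit.shadow_window_mem (hxs : IsPseudoOrbit K G xs) (he : ∀ t : S, e * t = t)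
    (heG : e ∈ G) (heK : e ∈ K) {W : Set S} (hWK : W ⊆ K) (hWG : W ⊆ G) {P : Set (W → A)}
    (hP : ∀ s, (fun w : W => xs s (w.1 * e)) ∈ P) (s : S) :
    (fun w : W => shadow e xs (w.1 * s)) ∈ P := by
  convert hP s using 2 with w
  rw [hxs.shadow_mul he heG (hWK w.2)]
  simpa only [he] using (hxs e heK s (hWG w.2)).symm

end PseudoOrbit

theorem stmt_9_general {S A : Type*} [Semigroup S] [Finite A] [UniformSpace A] [DiscreteTopology A]
    (e : S) (he : ∀ t : S, e * t = t)
    (X : Set (S → A))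
    (hinv : ∀ (s : S) (x : S → A), x ∈ X → (fun t => x (t * s)) ∈ X)
    (W : Finset S) (P : Set (∀ _ : (W : Set S), A))
    (hsft : X = {x : S → A | ∀ s : S, (fun w : (W : Set S) => x (w.1 * s)) ∈ P}) :
    ∀ U ∈ uniformity {x // x ∈ X}, ∃ K : Finset S, ∃ V ∈ uniformity {x // x ∈ X},
      ∀ xs : S → {x // x ∈ X},
        (∀ k ∈ K, ∀ s : S,
          ((⟨fun u => (xs s).1 (u * k), hinv k _ (xs s).2⟩ : {x // x ∈ X}), xs (k * s)) ∈ V) →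
        ∃ x : {x // x ∈ X}, ∀ s : S,
          ((⟨fun u => x.1 (u * s), hinv s _ x.2⟩ : {x // x ∈ X}), xs s) ∈ U := by
  classical
  have hbasis := (Pi.hasBasis_uniformity_of_discrete S A).comap fun q : X × X => (q.1.1, q.2.1)
  rw [← uniformity_subtype] at hbasis
  intro U hU
  obtain ⟨F, hF, hFU⟩ := hbasis.mem_iff.1 hU
  refine ⟨insert e (hF.toFinset ∪ W), _, hbasis.mem_of_mem (toFinite (insert e W)),
    fun xs hxs => ?_⟩
  have hpo : IsPseudoOrbit (insert e (F ∪ W)) (insert e W) fun s => (xs s).1 :=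
    fun k hk s => hxs k (by simpa using hk) s
  have hshadow : shadow e (fun s => (xs s).1) ∈ X := hsft.symm.subset <|
    hpo.shadow_window_mem he (mem_insert e _) (mem_insert e _)
      (subset_union_right.trans (subset_insert e _)) (subset_insert e _)
      (fun s => hsft.subset (xs s).2 e)
  refine ⟨⟨_, hshadow⟩, fun s => hFU fun f hf => ?_⟩
  exact hpo.shadow_mul he (mem_insert e _) (mem_insert_of_mem e (.inl hf)) s

/-- Let `S` be a semigroup with a left-identity element `e`, `A` a finite set, and
`X ⊆ A^S` a subshift of finite type. Then `(X,S)` has the pseudo-orbit tracing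
property. -/
theorem stmt_9 {S A : Type*} [Semigroup S] [Finite A] [UniformSpace A] [DiscreteTopology A]
    (e : S) (he : ∀ t : S, e * t = t)
    (X : Set (S → A)) (hXc : IsClosed X)
    (hinv : ∀ (s : S) (x : S → A), x ∈ X → (fun t => x (t * s)) ∈ X)
    (W : Finset S) (P : Set (∀ _ : (W : Set S), A))
    (hsft : X = {x : S → A | ∀ s : S, (fun w : (W : Set S) => x (w.1 * s)) ∈ P}) :
    ∀ U ∈ uniformity {x // x ∈ X}, ∃ K : Finset S, ∃ V ∈ uniformity {x // x ∈ X},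
      ∀ xs : S → {x // x ∈ X},
        (∀ k ∈ K, ∀ s : S,
          ((⟨fun u => (xs s).1 (u * k), hinv k _ (xs s).2⟩ : {x // x ∈ X}), xs (k * s)) ∈ V) →
        ∃ x : {x // x ∈ X}, ∀ s : S,
          ((⟨fun u => x.1 (u * s), hinv s _ x.2⟩ : {x // x ∈ X}), xs s) ∈ U :=
  stmt_9_general e he X hinv W P hsft
end
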